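/- arXiv:2204.01105 — 2 statements merged into one kernel-verified Lean document; each statement's English description precedes it below -/
import Mathlib

section
/- If β_1,...,β_m ∈ Z[ω]^m are m linearly independent vectors such that sum(β_k) ∈ (1+ω)Z[ω] for all k on the one hand, and |det([β_1,...,β_m])|² = 3 on the other hand, then the Z[ω]-span of β_1,...,β_m equals E_m = {(x_1,...,x_m) ∈ Z[ω]^m : Σ x_k ∈ (1+ω)Z[ω]}. -/
noncomputable def ω : ℂ := (1 + Real.sqrt 3 * Complex.I) / 2

def Zω : Set ℂ := {x | ∃ a b : ℤ, x = (a : ℂ) + (b : ℂ) * ω}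

def idealω : Set ℂ := {x | ∃ z ∈ Zω, x = (1 + ω) * z}

def Em (m : ℕ) : Set (Fin m → ℂ) :=
  {x | (∀ k, x k ∈ Zω) ∧ (∑ k, x k) ∈ idealω}

/-!
A vector of `E_m` is solved for by Cramer's rule: its coefficient on `β_k` is
`det(B_k) / det(B)`, where `B` is the matrix of the `β_k` and `B_k` is `B` with its `k`-th
column replaced by the vector. Every matrix whose columns lie in `E_m` has determinant in
`(1+ω)ℤ[ω]`: adding all other rows to the first makes every entry of that row a column sum. So
`det(B_k) = (1+ω) z` and `det(B) = (1+ω) v`, and `|det B|² = 3 = |1+ω|²` forces `|v| = 1`,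
so `v` is a unit of `ℤ[ω]` (with inverse `conj v`) and the coefficient `z * conj v` is in
`ℤ[ω]`.
-/

open Complex Matrix

theorem Subring.det_mem {A : Type*} [CommRing A] (S : Subring A) {ι : Type*} [Fintype ι]
    [DecidableEq ι] (M : Matrix ι ι A) (hM : ∀ i j, M i j ∈ S) : M.det ∈ S := by
  rw [Matrix.det_apply]
  refine S.sum_mem fun σ _ => ?_
  rw [Units.smul_def]
  exact S.zsmul_mem (S.prod_mem fun i _ => hM _ _) _

theorem Matrix.det_mem_of_sum_col_mem {A : Type*} [CommRing A] {S : Subring A}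
    (N : Submodule S A) {n : ℕ} (M : Matrix (Fin (n + 1)) (Fin (n + 1)) A)
    (hS : ∀ i j, M i j ∈ S) (hN : ∀ j, ∑ i, M i j ∈ N) : M.det ∈ N := by
  set M' := M.updateRow 0 (∑ k, M k)
  have hdet : M.det = M'.det := by
    simpa using (M.det_updateRow_sum 0 fun _ => 1).symm
  rw [hdet, Matrix.det_succ_row_zero]
  refine N.sum_mem fun j _ => ?_
  have hminor : (M'.submatrix Fin.succ j.succAbove).det ∈ S :=
    S.det_mem _ fun i j' => by
      simpa [M', Matrix.updateRow_ne (Fin.succ_ne_zero i)] using hS _ _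
  have hsign : ((-1 : A) ^ (j : ℕ)) ∈ S := S.pow_mem (S.neg_mem S.one_mem) _
  convert N.smul_mem ⟨_, S.mul_mem hsign hminor⟩ (hN j) using 1
  have hrow : M' 0 j = ∑ i, M i j := by
    rw [show M' 0 = ∑ k, M k from updateRow_self]; exact Finset.sum_apply _ _ _
  rw [Subring.smul_def, smul_eq_mul, hrow]
  ring

theorem Matrix.sum_cramer_div_det_smul_transpose {K : Type*} [Field K] {ι : Type*} [Fintype ι]
    [DecidableEq ι] (B : Matrix ι ι K) (hB : B.det ≠ 0) (x : ι → K) :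
    ∑ k, (B.cramer x k / B.det) • Bᵀ k = x := by
  have hc : (fun k => B.cramer x k / B.det) = B.det⁻¹ • B.cramer x := by
    funext k; simp [div_eq_inv_mul]
  rw [← vecMul_eq_sum, ← mulVec_transpose, transpose_transpose, hc, mulVec_smul, mulVec_cramer,
    smul_smul, inv_mul_cancel₀ hB, one_smul]

theorem ω_mul_self : ω * ω = ω - 1 := by
  have h3 : (Real.sqrt 3 : ℂ) ^ 2 = 3 := by
    rw [← ofReal_pow, Real.sq_sqrt (by norm_num)]; norm_num
  unfold ω
  linear_combination (h3 * I ^ 2 + 3 * I_sq) / 4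

theorem conj_ω : (starRingEnd ℂ) ω = 1 - ω := by
  unfold ω
  simp [map_div₀, conj_ofReal, map_ofNat]
  ring

theorem normSq_one_add_ω : normSq (1 + ω) = 3 := by
  have : 1 + ω = ((3 / 2 : ℝ) : ℂ) + ((Real.sqrt 3 / 2 : ℝ) : ℂ) * I := by
    unfold ω; push_cast; ring
  rw [this, normSq_add_mul_I, div_pow, div_pow, Real.sq_sqrt (by norm_num)]
  norm_num

theorem one_add_ω_ne_zero : 1 + ω ≠ 0 := by
  intro h
  simpa [h] using normSq_one_add_ω

def eisensteinSubring : Subring ℂ where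
  carrier := Zω
  zero_mem' := ⟨0, 0, by simp⟩
  one_mem' := ⟨1, 0, by simp⟩
  add_mem' := by
    rintro x y ⟨a, b, rfl⟩ ⟨c, d, rfl⟩
    exact ⟨a + c, b + d, by push_cast; ring⟩
  neg_mem' := by
    rintro x ⟨a, b, rfl⟩
    exact ⟨-a, -b, by push_cast; ring⟩
  mul_mem' := by
    rintro x y ⟨a, b, rfl⟩ ⟨c, d, rfl⟩
    refine ⟨a * c - b * d, a * d + b * c + b * d, ?_⟩
    push_cast
    linear_combination b * d * ω_mul_self

theorem conj_mem_Zω {x : ℂ} (hx : x ∈ Zω) : (starRingEnd ℂ) x ∈ Zω := by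
  obtain ⟨a, b, rfl⟩ := hx
  refine ⟨a + b, -b, ?_⟩
  simp only [map_add, map_mul, conj_ω, map_intCast]
  push_cast
  ring

theorem mem_idealω_iff_mem_span {x : ℂ} :
    x ∈ idealω ↔ x ∈ Submodule.span eisensteinSubring {1 + ω} := by
  rw [Submodule.mem_span_singleton]
  constructor
  · rintro ⟨z, hz, rfl⟩
    exact ⟨⟨z, hz⟩, by rw [Subring.smul_def]; exact mul_comm _ _⟩
  · rintro ⟨z, rfl⟩
    exact ⟨z, z.2, by rw [Subring.smul_def]; exact mul_comm _ _⟩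

theorem div_mem_Zω {a b : ℂ} (ha : a ∈ idealω) (hb : b ∈ idealω) (hb3 : normSq b = 3) :
    a / b ∈ Zω := by
  obtain ⟨z, hz, rfl⟩ := ha
  obtain ⟨v, hv, rfl⟩ := hb
  have hv1 : normSq v = 1 := by
    rw [normSq_mul, normSq_one_add_ω] at hb3; linarith
  have hquot : (1 + ω) * z / ((1 + ω) * v) = z * (starRingEnd ℂ) v := by
    rw [mul_div_mul_left _ _ one_add_ω_ne_zero, div_eq_mul_inv, inv_def, hv1]
    simp
  rw [hquot]
  exact eisensteinSubring.mul_mem hz (conj_mem_Zω hv)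

theorem sum_smul_mem_Em {m n : ℕ} (β : Fin n → Fin m → ℂ) (c : Fin n → ℂ)
    (hβ : ∀ k, β k ∈ Em m) (hc : ∀ k, c k ∈ Zω) : ∑ k, c k • β k ∈ Em m := by
  refine ⟨fun i => ?_, ?_⟩
  · simp only [Finset.sum_apply, Pi.smul_apply, smul_eq_mul]
    exact eisensteinSubring.sum_mem fun k _ => eisensteinSubring.mul_mem (hc k) ((hβ k).1 i)
  · have hswap : ∑ i, (∑ k, c k • β k) i = ∑ k, c k * ∑ i, β k i := by
      simp only [Finset.sum_apply, Pi.smul_apply, smul_eq_mul, Finset.mul_sum]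
      exact Finset.sum_comm
    rw [hswap, mem_idealω_iff_mem_span]
    exact Submodule.sum_mem _ fun k _ =>
      Submodule.smul_mem _ ⟨c k, hc k⟩ (mem_idealω_iff_mem_span.mp (hβ k).2)

theorem det_mem_idealω {n : ℕ} (M : Matrix (Fin (n + 1)) (Fin (n + 1)) ℂ)
    (hM : ∀ i, M i ∈ Em (n + 1)) : M.det ∈ idealω := by
  rw [← det_transpose, mem_idealω_iff_mem_span]
  exact Mᵀ.det_mem_of_sum_col_mem _ (fun i j => (hM j).1 i)
    fun j => mem_idealω_iff_mem_span.mp (hM j).2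

theorem stmt5_general (m : ℕ) (β : Fin m → (Fin m → ℂ))
    (hZ : ∀ k i, β k i ∈ Zω)
    (hsum : ∀ k, (∑ i, β k i) ∈ idealω)
    (hdet : Complex.normSq (Matrix.det (Matrix.of fun i k => β k i)) = 3) :
    {x | ∃ c : Fin m → ℂ, (∀ k, c k ∈ Zω) ∧ x = ∑ k, c k • β k} = Em m := by
  set B : Matrix (Fin m) (Fin m) ℂ := Matrix.of fun i k => β k i
  have hβ : ∀ k, β k ∈ Em m := fun k => ⟨hZ k, hsum k⟩
  obtain ⟨n, rfl⟩ : ∃ n, m = n + 1 :=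
    Nat.exists_eq_succ_of_ne_zero fun h => by subst h; norm_num [B] at hdet
  have hB0 : B.det ≠ 0 := fun h => by norm_num [h] at hdet
  ext x
  constructor
  · rintro ⟨c, hc, rfl⟩
    exact sum_smul_mem_Em β c hβ hc
  · intro hx
    have hdetB : B.det ∈ idealω := by
      rw [← det_transpose]; exact det_mem_idealω _ hβ
    refine ⟨fun k => B.cramer x k / B.det, fun k => div_mem_Zω ?_ hdetB hdet, ?_⟩
    · rw [cramer_apply, ← det_transpose, ← updateRow_transpose]
      refine det_mem_idealω _ fun i => ?_
      rcases eq_or_ne i k with rfl | hik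
      · simpa using hx
      · rw [updateRow_ne hik]; exact hβ i
    · exact (B.sum_cramer_div_det_smul_transpose hB0 x).symm

/-- If β_1,...,β_m ∈ Z[ω]^m are linearly independent, each with coordinate sum in
(1+ω)Z[ω], and |det([β_1,...,β_m])|² = 3, then their Z[ω]-span equals E_m. -/
theorem stmt5 (m : ℕ) (β : Fin m → (Fin m → ℂ))
    (hZ : ∀ k i, β k i ∈ Zω)
    (hind : LinearIndependent ℂ β)
    (hsum : ∀ k, (∑ i, β k i) ∈ idealω)
    (hdet : Complex.normSq (Matrix.det (Matrix.of fun i k => β k i)) = 3) :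
    {x | ∃ c : Fin m → ℂ, (∀ k, c k ∈ Zω) ∧ x = ∑ k, c k • β k} = Em m :=
  stmt5_general m β hZ hsum hdet
end

section
/- Let b_1,...,b_m be the standard basis of E_m (b_k = e_k + ω e_m for k < m, b_m = (1+ω)e_m) and let d = b_1 + ... + b_m = (1,1,...,1, mω+1). Then the set E_{m,2}^+ := E_m ∪ (E_m + d/2) ∪ (E_m + ωd/2) ∪ (E_m + ω*d/2) equals the Z[ω]-module Z[ω]·(d/2) ⊕ Z[ω]·b_2 ⊕ ... ⊕ Z[ω]·b_m; in particular E_{m,2}^+ is closed under addition (it is a lattice). -/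
lemma omega_sq : ω ^ 2 = ω - 1 := by
  have h3 : (Real.sqrt 3 : ℂ) ^ 2 = 3 := by
    norm_cast
    rw [Real.sq_sqrt] <;> norm_num
  unfold ω
  linear_combination (Complex.I ^ 2 / 4) * h3 + (3 / 4) * Complex.I_sq

lemma Zω_mk (a b : ℤ) : ((a : ℂ) + (b : ℂ) * ω) ∈ Zω := ⟨a, b, rfl⟩

lemma Zω_zero : (0 : ℂ) ∈ Zω := ⟨0, 0, by norm_num⟩
lemma Zω_one : (1 : ℂ) ∈ Zω := ⟨1, 0, by norm_num⟩
lemma Zω_omega : ω ∈ Zω := ⟨0, 1, by norm_num⟩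

lemma Zω_add {x y : ℂ} (hx : x ∈ Zω) (hy : y ∈ Zω) : x + y ∈ Zω := by
  obtain ⟨a, b, rfl⟩ := hx; obtain ⟨c, d, rfl⟩ := hy
  exact ⟨a + c, b + d, by push_cast; ring⟩

lemma Zω_neg {x : ℂ} (hx : x ∈ Zω) : -x ∈ Zω := by
  obtain ⟨a, b, rfl⟩ := hx
  exact ⟨-a, -b, by push_cast; ring⟩

lemma Zω_sub {x y : ℂ} (hx : x ∈ Zω) (hy : y ∈ Zω) : x - y ∈ Zω := by
  rw [sub_eq_add_neg]; exact Zω_add hx (Zω_neg hy)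

lemma Zω_mul {x y : ℂ} (hx : x ∈ Zω) (hy : y ∈ Zω) : x * y ∈ Zω := by
  obtain ⟨a, b, rfl⟩ := hx; obtain ⟨c, d, rfl⟩ := hy
  refine ⟨a * c - b * d, a * d + b * c + b * d, ?_⟩
  push_cast
  linear_combination (b : ℂ) * (d : ℂ) * omega_sq

lemma Zω_sum {ι : Type*} (s : Finset ι) (f : ι → ℂ) (h : ∀ i ∈ s, f i ∈ Zω) :
    (∑ i ∈ s, f i) ∈ Zω := by
  classical
  induction s using Finset.induction_on with
  | empty => simpa using Zω_zero
  | @insert a s' hne ih =>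
      rw [Finset.sum_insert hne]
      exact Zω_add (h a (Finset.mem_insert_self a s')) (ih fun i hi => h i (Finset.mem_insert_of_mem hi))

noncomputable def bE (m : ℕ) : Fin (m + 1) → (Fin (m + 1) → ℂ) := fun k i =>
  if k = Fin.last m then (if i = Fin.last m then 1 + ω else 0)
  else (if i = k then 1 else if i = Fin.last m then ω else 0)

noncomputable def dE (m : ℕ) : Fin (m + 1) → ℂ := ∑ k, bE m k

lemma bE_entry_mem (m : ℕ) (k i : Fin (m + 1)) : bE m k i ∈ Zω := by
  unfold bE
  split_ifs
  · exact Zω_add Zω_one Zω_omega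
  · exact Zω_zero
  · exact Zω_one
  · exact Zω_omega
  · exact Zω_zero

lemma bE_sum (m : ℕ) (k : Fin (m + 1)) : (∑ i, bE m k i) = 1 + ω := by
  unfold bE
  by_cases hk : k = Fin.last m
  · simp [hk]
  · simp only [hk, if_false]
    have : ∀ i : Fin (m + 1),
        (if i = k then (1 : ℂ) else if i = Fin.last m then ω else 0)
          = (if i = k then (1 : ℂ) else 0) + (if i = Fin.last m then ω else 0) := by
      intro i
      by_cases h1 : i = k
      · subst h1; simp [hk]
      · simp [h1]
    rw [Finset.sum_congr rfl fun i _ => this i, Finset.sum_add_distrib]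
    simp [Finset.sum_ite_eq']

lemma comb_mem_Em (m : ℕ) (c : Fin (m + 1) → ℂ) (hc : ∀ k, c k ∈ Zω) :
    (∑ k, c k • bE m k) ∈ Em (m + 1) := by
  constructor
  · intro i
    simp only [Finset.sum_apply, Pi.smul_apply, smul_eq_mul]
    exact Zω_sum _ _ fun k _ => Zω_mul (hc k) (bE_entry_mem m k i)
  · have : (∑ i, (∑ k, c k • bE m k) i) = (1 + ω) * (∑ k, c k) := by
      simp only [Finset.sum_apply, Pi.smul_apply, smul_eq_mul]
      rw [Finset.sum_comm]
      rw [Finset.mul_sum]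
      refine Finset.sum_congr rfl fun k _ => ?_
      rw [← Finset.mul_sum, bE_sum]
      ring
    rw [this]
    exact ⟨∑ k, c k, Zω_sum _ _ fun k _ => hc k, rfl⟩

lemma Em_span (m : ℕ) (e : Fin (m + 1) → ℂ) (he : e ∈ Em (m + 1)) :
    ∃ c : Fin (m + 1) → ℂ, (∀ k, c k ∈ Zω) ∧ e = ∑ k, c k • bE m k := by
  obtain ⟨hent, w, hw, hsum⟩ := he
  set S : ℂ := ∑ i : Fin m, e i.castSucc with hS
  refine ⟨fun k => if k = Fin.last m then w - S else e k, ?_, ?_⟩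
  · intro k
    by_cases hk : k = Fin.last m
    · simp only [hk, if_pos rfl]
      exact Zω_sub hw (Zω_sum _ _ fun i _ => hent _)
    · simp only [hk, if_false]
      exact hent k
  · funext i
    simp only [Finset.sum_apply, Pi.smul_apply, smul_eq_mul]
    rw [Fin.sum_univ_castSucc]
    by_cases hi : i = Fin.last m
    · subst hi
      have hcs : ∀ j : Fin m, (j.castSucc : Fin (m+1)) ≠ Fin.last m :=
        fun j => Fin.ne_last_of_lt (Fin.castSucc_lt_last j)
      have hb : ∀ j : Fin m, bE m j.castSucc (Fin.last m) = ω := by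
        intro j
        simp [bE, hcs j, (hcs j).symm]
      have he' : e (Fin.last m) = (1 + ω) * w - S := by
        rw [Fin.sum_univ_castSucc, ← hS] at hsum
        linear_combination hsum
      have hbl : bE m (Fin.last m) (Fin.last m) = 1 + ω := by simp [bE]
      rw [Finset.sum_congr rfl (fun j _ => by rw [if_neg (hcs j), hb j])]
      rw [if_pos rfl, hbl, ← Finset.sum_mul, ← hS, he']
      ring
    · obtain ⟨j, rfl⟩ := Fin.exists_castSucc_eq.mpr hi
      have hne : (j.castSucc : Fin (m+1)) ≠ Fin.last m := Fin.ne_last_of_lt (Fin.castSucc_lt_last j)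
      have hb0 : bE m (Fin.last m) j.castSucc = 0 := by simp [bE, hne]
      have hb : ∀ i' : Fin m, bE m i'.castSucc j.castSucc = if i' = j then 1 else 0 := by
        intro i'
        have h' : (i'.castSucc : Fin (m+1)) ≠ Fin.last m := Fin.ne_last_of_lt (Fin.castSucc_lt_last i')
        by_cases h : i' = j
        · subst h; simp [bE, h']
        · have : (j.castSucc : Fin (m+1)) ≠ i'.castSucc := by
            simpa [Fin.castSucc_inj] using (Ne.symm h)
          simp [bE, h', this, hne, h]
      simp only [fun i' : Fin m => (if_neg (Fin.ne_last_of_lt (Fin.castSucc_lt_last i')) :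
        (if (i'.castSucc : Fin (m+1)) = Fin.last m then w - S else e i'.castSucc) = e i'.castSucc),
        if_pos rfl, hb0, hb, mul_zero, add_zero]
      simp [mul_ite, Finset.sum_ite_eq', Finset.sum_ite_eq]

lemma hd_split (m : ℕ) : dE m = bE m 0 + ∑ i : Fin m, bE m i.succ := by
  rw [dE, Fin.sum_univ_succ]

lemma key1 (m : ℕ) (c : Fin (m + 1) → ℂ) (γ : ℂ) :
    (∑ k, c k • bE m k) + γ • ((2 : ℂ)⁻¹ • dE m)
      = ∑ k, (if k = 0 then 2 * c 0 + γ else c k - c 0) •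
          (if k = 0 then (2 : ℂ)⁻¹ • dE m else bE m k) := by
  rw [Fin.sum_univ_succ, Fin.sum_univ_succ]
  simp only [↓reduceIte, Fin.succ_ne_zero, ite_false, sub_smul,
    Finset.sum_sub_distrib]
  rw [← Finset.smul_sum, hd_split m]
  module

lemma key2 (m : ℕ) (c : Fin (m + 1) → ℂ) (q γ : ℂ) (hq : c 0 = 2 * q + γ) :
    ∑ k, c k • (if k = 0 then (2 : ℂ)⁻¹ • dE m else bE m k)
      = (∑ k, (if k = 0 then q else q + c k) • bE m k) + γ • ((2 : ℂ)⁻¹ • dE m) := by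
  rw [Fin.sum_univ_succ, Fin.sum_univ_succ]
  simp only [↓reduceIte, Fin.succ_ne_zero, ite_false, add_smul,
    Finset.sum_add_distrib]
  rw [← Finset.smul_sum, hd_split m, hq]
  module

lemma gam_mem {γ : ℂ} (h : γ ∈ ({0, 1, ω, 1 - ω} : Set ℂ)) : γ ∈ Zω := by
  rcases h with h | h | h | h <;> subst h
  · exact Zω_zero
  · exact Zω_one
  · exact Zω_omega
  · exact Zω_sub Zω_one Zω_omega

lemma decomp (a b : ℤ) : ∃ q γ : ℂ, q ∈ Zω ∧ γ ∈ ({0, 1, ω, 1 - ω} : Set ℂ) ∧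
    (a : ℂ) + (b : ℂ) * ω = 2 * q + γ := by
  rcases Int.even_or_odd a with ⟨a', ha⟩ | ⟨a', ha⟩ <;>
    rcases Int.even_or_odd b with ⟨b', hb⟩ | ⟨b', hb⟩
  · exact ⟨(a' : ℂ) + (b' : ℂ) * ω, 0, Zω_mk a' b', by simp,
      by rw [ha, hb]; push_cast; ring⟩
  · exact ⟨(a' : ℂ) + (b' : ℂ) * ω, ω, Zω_mk a' b', by simp,
      by rw [ha, hb]; push_cast; ring⟩
  · exact ⟨(a' : ℂ) + (b' : ℂ) * ω, 1, Zω_mk a' b', by simp,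
      by rw [ha, hb]; push_cast; ring⟩
  · refine ⟨(a' : ℂ) + ((b' + 1 : ℤ) : ℂ) * ω, 1 - ω, Zω_mk a' (b' + 1), by simp, ?_⟩
    rw [ha, hb]; push_cast; ring

/-- E_{m,2}^+ = E_m ∪ (E_m + d/2) ∪ (E_m + ωd/2) ∪ (E_m + ω*d/2) equals the
Z[ω]-module Z[ω]·(d/2) ⊕ Z[ω]·b_2 ⊕ ... ⊕ Z[ω]·b_m; in particular it is closed
under addition. -/
theorem stmt7 (m : ℕ) :
    ({x | ∃ e ∈ Em (m + 1), ∃ γ ∈ ({0, 1, ω, 1 - ω} : Set ℂ),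
        x = e + γ • ((2 : ℂ)⁻¹ • dE m)}
      = {x | ∃ c : Fin (m + 1) → ℂ, (∀ k, c k ∈ Zω) ∧
          x = ∑ k, c k • (if k = 0 then (2 : ℂ)⁻¹ • dE m else bE m k)}) ∧
    (∀ x ∈ {x | ∃ e ∈ Em (m + 1), ∃ γ ∈ ({0, 1, ω, 1 - ω} : Set ℂ),
        x = e + γ • ((2 : ℂ)⁻¹ • dE m)},
     ∀ y ∈ {x | ∃ e ∈ Em (m + 1), ∃ γ ∈ ({0, 1, ω, 1 - ω} : Set ℂ),
        x = e + γ • ((2 : ℂ)⁻¹ • dE m)},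
      x + y ∈ {x | ∃ e ∈ Em (m + 1), ∃ γ ∈ ({0, 1, ω, 1 - ω} : Set ℂ),
        x = e + γ • ((2 : ℂ)⁻¹ • dE m)}) := by
  have heq : ({x | ∃ e ∈ Em (m + 1), ∃ γ ∈ ({0, 1, ω, 1 - ω} : Set ℂ),
        x = e + γ • ((2 : ℂ)⁻¹ • dE m)}
      = {x | ∃ c : Fin (m + 1) → ℂ, (∀ k, c k ∈ Zω) ∧
          x = ∑ k, c k • (if k = 0 then (2 : ℂ)⁻¹ • dE m else bE m k)}) := by
    ext x
    simp only [Set.mem_setOf_eq]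
    constructor
    · rintro ⟨e, he, γ, hγ, rfl⟩
      obtain ⟨c, hc, rfl⟩ := Em_span m e he
      refine ⟨fun k => if k = 0 then 2 * c 0 + γ else c k - c 0, ?_, key1 m c γ⟩
      intro k
      by_cases hk : k = 0
      · simp only [hk, if_pos rfl]
        exact Zω_add (Zω_mul ⟨2, 0, by norm_num⟩ (hc 0)) (gam_mem hγ)
      · simp only [hk, if_false]
        exact Zω_sub (hc k) (hc 0)
    · rintro ⟨c, hc, rfl⟩
      obtain ⟨a, b, hab⟩ := hc 0
      obtain ⟨q, γ, hqZ, hγ, hqγ⟩ := decomp a b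
      have hq : c 0 = 2 * q + γ := by rw [hab, hqγ]
      refine ⟨∑ k, (if k = 0 then q else q + c k) • bE m k, ?_, γ, hγ, key2 m c q γ hq⟩
      refine comb_mem_Em m _ fun k => ?_
      by_cases hk : k = 0
      · simp only [hk, if_pos rfl]; exact hqZ
      · simp only [hk, if_false]; exact Zω_add hqZ (hc k)
  refine ⟨heq, ?_⟩
  intro x hx y hy
  rw [heq] at hx hy ⊢
  obtain ⟨c, hc, rfl⟩ := hx
  obtain ⟨c', hc', rfl⟩ := hy
  exact ⟨fun k => c k + c' k, fun k => Zω_add (hc k) (hc' k),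
    by rw [← Finset.sum_add_distrib]; exact Finset.sum_congr rfl fun k _ => (add_smul _ _ _).symm⟩
end
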